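/- For every t ≥ 1 the potential recursion holds: if each example z in S has h_t having weighted error at most 1/(5k) under p_t, then Φ_{t+1} ≤ (Φ_t/2)·(1 + 1/(5k)) ≤ Φ_t · 2^{-1 + 1/(2k)}. -/
import Mathlib


/-- Boosting weight: `Wt h t z = 2^{-#{s < t : h_s correct on z}}`, so that
`Wt h 0 z = 1` and `Wt h (t+1) z = Wt h t z · 2^{-[h_t correct on z]}`. -/
noncomputable def Wt {X : Type*} (h : ℕ → X → Bool) (t : ℕ) (z : X × Bool) : ℝ :=
  ((2 : ℝ) ^ (((Finset.range t).filter (fun s => h s z.1 = z.2)).card))⁻¹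

/-- The potential `Φ_t = ∑ z ∈ S, W_t(z)`. -/
noncomputable def Phi {X : Type*} (S : Finset (X × Bool)) (h : ℕ → X → Bool)
    (t : ℕ) : ℝ :=
  ∑ z ∈ S, Wt h t z

lemma Wt_pos {X : Type*} (h : ℕ → X → Bool) (t : ℕ) (z : X × Bool) :
    0 < Wt h t z := by
  unfold Wt; positivity

lemma Wt_succ {X : Type*} (h : ℕ → X → Bool) (t : ℕ) (z : X × Bool) :
    Wt h (t + 1) z = if h t z.1 = z.2 then Wt h t z / 2 else Wt h t z := by
  unfold Wt
  rw [Finset.range_add_one, Finset.filter_insert]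
  split
  · rw [Finset.card_insert_of_notMem (by simp), pow_succ]
    rw [mul_inv, div_eq_mul_inv]
  · rfl

lemma key_ineq (k : ℝ) (hk : 1 ≤ k) :
    1 + 1 / (5 * k) ≤ Real.rpow 2 (1 / (2 * k)) := by
  have hk0 : (0:ℝ) < k := lt_of_lt_of_le one_pos hk
  have h1 : Real.rpow 2 (1 / (2 * k)) = Real.exp (Real.log 2 * (1 / (2 * k))) := by
    show (2:ℝ) ^ (1 / (2 * k)) = _
    rw [Real.rpow_def_of_pos two_pos]
  rw [h1]
  have h2 : 1 / (5 * k) ≤ Real.log 2 * (1 / (2 * k)) := by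
    have hlog : (2:ℝ)/5 ≤ Real.log 2 := by
      have := Real.log_two_gt_d9; linarith
    rw [mul_one_div, div_le_div_iff₀ (by positivity) (by positivity)]
    nlinarith
  have h3 := Real.add_one_le_exp (Real.log 2 * (1 / (2 * k)))
  linarith

/-- Potential recursion: if `h_t` has weighted error at most `1/(5k)` under
`p_t = W_t/Φ_t`, then `Φ_{t+1} ≤ (Φ_t/2)(1 + 1/(5k)) ≤ Φ_t · 2^{-1+1/(2k)}`. -/
theorem potential_recursion {X : Type*} (S : Finset (X × Bool))
    (h : ℕ → X → Bool) (k : ℝ) (hk : 1 ≤ k) (t : ℕ)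
    (hweak :
      (∑ z ∈ S.filter (fun z => h t z.1 ≠ z.2), Wt h t z) / Phi S h t ≤
        1 / (5 * k)) :
    Phi S h (t + 1) ≤ (Phi S h t / 2) * (1 + 1 / (5 * k)) ∧
    (Phi S h t / 2) * (1 + 1 / (5 * k)) ≤
      Phi S h t * Real.rpow 2 (-1 + 1 / (2 * k)) := by
  have hk0 : (0:ℝ) < k := lt_of_lt_of_le one_pos hk
  have h5k : (0:ℝ) < 5 * k := by positivity
  set E := ∑ z ∈ S.filter (fun z => h t z.1 ≠ z.2), Wt h t z with hE
  set C := ∑ z ∈ S.filter (fun z => h t z.1 = z.2), Wt h t z with hC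
  have hEnn : 0 ≤ E := Finset.sum_nonneg fun z _ => (Wt_pos h t z).le
  have hCnn : 0 ≤ C := Finset.sum_nonneg fun z _ => (Wt_pos h t z).le
  have hPhi : Phi S h t = C + E := by
    rw [Phi, ← Finset.sum_filter_add_sum_filter_not S (fun z => h t z.1 = z.2)]
  have hPhinn : 0 ≤ Phi S h t := by rw [hPhi]; linarith
  -- E ≤ Φ/(5k)
  have hEle : E * (5 * k) ≤ Phi S h t := by
    rcases eq_or_lt_of_le hPhinn with h0 | hpos
    · have hEPhi : E ≤ Phi S h t := by rw [hPhi]; linarith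
      have : E = 0 := le_antisymm (by linarith [hEPhi, h0.symm ▸ (le_refl (0:ℝ))]) hEnn
      rw [this]; simp [← h0]
    · rw [div_le_div_iff₀ hpos h5k] at hweak
      linarith
  have hsucc : Phi S h (t + 1) = C / 2 + E := by
    rw [Phi]
    rw [show (∑ z ∈ S, Wt h (t+1) z)
        = ∑ z ∈ S, (if h t z.1 = z.2 then Wt h t z / 2 else Wt h t z) from
      Finset.sum_congr rfl fun z _ => Wt_succ h t z]
    rw [Finset.sum_ite, ← Finset.sum_div]
  constructor
  · rw [hsucc, hPhi]
    have hinv : (5 * k) * (1 / (5 * k)) = 1 := mul_one_div_cancel (ne_of_gt h5k)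
    rw [hPhi] at hEle
    nlinarith [hEle, h5k, hEnn, hCnn]
  · have hkey := key_ineq k hk
    have hrw : Real.rpow 2 (-1 + 1 / (2 * k)) = Real.rpow 2 (1 / (2 * k)) / 2 := by
      show (2:ℝ) ^ ((-1:ℝ) + 1 / (2 * k)) = (2:ℝ) ^ (1 / (2 * k)) / 2
      rw [Real.rpow_add two_pos, Real.rpow_neg_one]
      ring
    rw [hrw]
    have := mul_le_mul_of_nonneg_left hkey (by linarith : (0:ℝ) ≤ Phi S h t / 2)
    calc (Phi S h t / 2) * (1 + 1 / (5 * k))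
        ≤ (Phi S h t / 2) * Real.rpow 2 (1 / (2 * k)) := this
      _ = Phi S h t * (Real.rpow 2 (1 / (2 * k)) / 2) := by ring
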